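/- If a closed subset A of a space X is a ℤ/p-homological Z_n-set in X, then A is a Prüfer-p-group-homological Z_n-set in X; conversely, if A is a Prüfer-p-group-homological Z_{n+1}-set, then A is a ℤ/p-homological Z_n-set. -/

import Mathlib

open SimplexCategory

noncomputable section

/-- The topological `n`-simplex. -/
abbrev TopSimplex (n : ℕ) : Type := stdSimplex ℝ (Fin (n + 1))

/-- The `i`-th face inclusion of topological simplices, as a continuous map. -/
def faceMap {n : ℕ} (i : Fin (n + 2)) : C(TopSimplex n, TopSimplex (n + 1)) :=
  ⟨stdSimplex.map (SimplexCategory.δ i).toOrderHom, stdSimplex.continuous_map _⟩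

/-- The group of singular `n`-chains of `X` with coefficients in `G`. -/
abbrev SChain (G : Type) [AddCommGroup G] (X : Type) [TopologicalSpace X] (n : ℕ) : Type :=
  C(TopSimplex n, X) →₀ G

/-- The singular boundary operator. -/
def sBoundary {G : Type} [AddCommGroup G] {X : Type} [TopologicalSpace X] {n : ℕ}
    (c : SChain G X (n + 1)) : SChain G X n :=
  c.sum fun σ g => ∑ i : Fin (n + 2), ((-1 : ℤ) ^ (i : ℕ)) • Finsupp.single (σ.comp (faceMap i)) g

/-- The chain map induced by a continuous map. -/
def chainMap {G : Type} [AddCommGroup G] {X Y : Type} [TopologicalSpace X] [TopologicalSpace Y]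
    (φ : C(X, Y)) {n : ℕ} (c : SChain G X n) : SChain G Y n :=
  Finsupp.mapDomain (fun σ => φ.comp σ) c

/-- The continuous inclusion of one subspace into a larger one. -/
def inclCM {X : Type} [TopologicalSpace X] {B U : Set X} (h : B ⊆ U) : C(B, U) :=
  ⟨Set.inclusion h, continuous_inclusion h⟩

/-- `ZeroRelHomology G U B h k` says that the relative singular homology group
`H_k(U, B; G)` of the pair of subspaces `B ⊆ U` is trivial: every relative
`k`-cycle is a relative `k`-boundary. -/
def ZeroRelHomology (G : Type) [AddCommGroup G] {X : Type} [TopologicalSpace X]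
    (U B : Set X) (h : B ⊆ U) : ℕ → Prop
  | 0 => ∀ c : SChain G U 0, ∃ (c' : SChain G U 1) (d : SChain G B 0),
      c = sBoundary c' + chainMap (inclCM h) d
  | (k + 1) => ∀ c : SChain G U (k + 1),
      (∃ e : SChain G B k, sBoundary c = chainMap (inclCM h) e) →
      ∃ (c' : SChain G U (k + 2)) (d : SChain G B (k + 1)),
        c = sBoundary c' + chainMap (inclCM h) d

/-- `A` is a `G`-homological `Z_n`-set in `X`. -/
def IsGHomologicalZSet (G : Type) [AddCommGroup G] {X : Type} [TopologicalSpace X]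
    (A : Set X) (n : ℕ) : Prop :=
  IsClosed A ∧ ∀ U : Set X, IsOpen U → ∀ k ≤ n,
    ZeroRelHomology G U (U \ A) Set.diff_subset k

/-- The `p`-torsion part of an abelian group. -/
def pTorsion (p : ℕ) (G : Type) [AddCommGroup G] : AddSubgroup G where
  carrier := {x : G | ∃ k : ℕ, (p ^ k : ℕ) • x = 0}
  zero_mem' := ⟨0, by simp⟩
  add_mem' := by
    rintro a b ⟨k, hk⟩ ⟨l, hl⟩
    refine ⟨k + l, ?_⟩
    have h1 : (p ^ (k + l) : ℕ) • a = 0 := by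
      rw [pow_add, mul_comm, mul_smul, hk, smul_zero]
    have h2 : (p ^ (k + l) : ℕ) • b = 0 := by
      rw [pow_add, mul_smul, hl, smul_zero]
    rw [smul_add, h1, h2, add_zero]
  neg_mem' := by
    rintro a ⟨k, hk⟩
    exact ⟨k, by rw [smul_neg, hk, neg_zero]⟩

/-- The Prüfer (quasicyclic) `p`-group `ℚ_p`, realized as the `p`-torsion part of `ℚ/ℤ`;
it is the direct limit of the groups `ℤ/p^k`. -/
abbrev PruferGroup (p : ℕ) : Type :=
  ↥(pTorsion p (ℚ ⧸ AddSubgroup.zmultiples (1 : ℚ)))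

/-!
Both implications are diagram chases in the long exact sequence of relative singular homology
of the coefficient sequence `0 → ℤ/p → ℚ_p → ℚ_p → 0`, whose second map is multiplication by `p`.
Backwards, `H_k(ℚ_p) = 0` and `H_{k+1}(ℚ_p) = 0` force `H_k(ℤ/p) = 0`. Forwards, a relative cycle
`c` with coefficients in `ℚ_p` is finitely supported, hence killed by some `p^m`; by induction on
`m`, `p • c` is a relative boundary, and the chase lifts this to `c` because `H_k(ℤ/p) = 0`.
The chases are run on chains: `H_k(U, B) = 0` says that every relative cycle has the form
`∂c' + d` with `d` a chain of `B`.
-/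

open CategoryTheory AlgebraicTopology

variable {G H K : Type} [AddCommGroup G] [AddCommGroup H] [AddCommGroup K]
  {X Y : Type} [TopologicalSpace X] [TopologicalSpace Y]

def precompChain (G : Type) [AddCommGroup G] (X : Type) [TopologicalSpace X] {m k : ℕ}
    (f : Fin (m + 1) → Fin (k + 1)) : SChain G X k →+ SChain G X m :=
  Finsupp.mapDomain.addMonoidHom fun σ => σ.comp ⟨stdSimplex.map f, stdSimplex.continuous_map f⟩

theorem precompChain_id {n : ℕ} (c : SChain G X n) : precompChain G X id c = c := by
  refine (Finsupp.mapDomain_congr fun σ _ => ?_).trans Finsupp.mapDomain_id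
  ext x
  exact congrArg σ (stdSimplex.map_id_apply x)

theorem precompChain_comp {m k l : ℕ} (f : Fin (m + 1) → Fin (k + 1))
    (g : Fin (k + 1) → Fin (l + 1)) (c : SChain G X l) :
    precompChain G X (g ∘ f) c = precompChain G X f (precompChain G X g c) := by
  refine (Finsupp.mapDomain_congr fun σ _ => ?_).trans Finsupp.mapDomain_comp
  ext x
  exact congrArg σ (stdSimplex.map_comp_apply f g x).symm

def singularChains (G : Type) [AddCommGroup G] (X : Type) [TopologicalSpace X] :
    SimplicialObject AddCommGrpCat where
  obj n := AddCommGrpCat.of (SChain G X n.unop.len)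
  map f := AddCommGrpCat.ofHom (precompChain G X f.unop.toOrderHom)
  map_id _ := AddCommGrpCat.ext precompChain_id
  map_comp f g := AddCommGrpCat.ext (precompChain_comp g.unop.toOrderHom f.unop.toOrderHom)

def boundaryHom (G : Type) [AddCommGroup G] (X : Type) [TopologicalSpace X] (n : ℕ) :
    SChain G X (n + 1) →+ SChain G X n :=
  (AlternatingFaceMapComplex.objD (singularChains G X) n).hom

theorem boundaryHom_eq_sum (n : ℕ) : boundaryHom G X n =
    ∑ i : Fin (n + 2), (-1 : ℤ) ^ (i : ℕ) • precompChain G X (SimplexCategory.δ i).toOrderHom := by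
  simp only [boundaryHom, AlternatingFaceMapComplex.objD, ← AddCommGrpCat.homAddEquiv_apply,
    map_sum, map_zsmul]
  rfl

theorem boundaryHom_apply {n : ℕ} (c : SChain G X (n + 1)) : boundaryHom G X n c = sBoundary c := by
  rw [boundaryHom_eq_sum, AddMonoidHom.finsetSum_apply, sBoundary, Finsupp.sum]
  simp only [AddMonoidHom.smul_apply, precompChain, Finsupp.mapDomain.addMonoidHom_apply,
    Finsupp.mapDomain, Finsupp.sum, Finset.smul_sum]
  exact Finset.sum_comm

theorem boundaryHom_boundaryHom {n : ℕ} (c : SChain G X (n + 2)) :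
    boundaryHom G X n (boundaryHom G X (n + 1) c) = 0 :=
  ConcreteCategory.congr_hom (AlternatingFaceMapComplex.d_squared (singularChains G X) n) c

def chainMapHom (φ : C(X, Y)) (G : Type) [AddCommGroup G] (n : ℕ) :
    SChain G X n →+ SChain G Y n :=
  Finsupp.mapDomain.addMonoidHom φ.comp

theorem chainMapHom_apply (φ : C(X, Y)) {n : ℕ} (c : SChain G X n) :
    chainMapHom φ G n c = chainMap φ c := rfl

theorem chainMapHom_injective {φ : C(X, Y)} (hφ : Function.Injective φ) (n : ℕ) :
    Function.Injective (chainMapHom φ G n) :=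
  Finsupp.mapDomain_injective fun _ _ h => ContinuousMap.ext fun x => hφ (DFunLike.congr_fun h x)

theorem chainMapHom_precompChain (φ : C(X, Y)) {m k : ℕ} (f : Fin (m + 1) → Fin (k + 1))
    (c : SChain G X k) :
    chainMapHom φ G m (precompChain G X f c) = precompChain G Y f (chainMapHom φ G k c) := by
  simp only [chainMapHom, precompChain, Finsupp.mapDomain.addMonoidHom_apply,
    ← Finsupp.mapDomain_comp]
  rfl

theorem boundaryHom_chainMapHom (φ : C(X, Y)) {n : ℕ} (c : SChain G X (n + 1)) :
    boundaryHom G Y n (chainMapHom φ G (n + 1) c) = chainMapHom φ G n (boundaryHom G X n c) := by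
  simp only [boundaryHom_eq_sum, AddMonoidHom.finsetSum_apply, AddMonoidHom.smul_apply, map_sum,
    map_zsmul, chainMapHom_precompChain]

def mapCoeff (f : G →+ H) {X : Type} [TopologicalSpace X] {n : ℕ} :
    SChain G X n →+ SChain H X n :=
  Finsupp.mapRange.addMonoidHom f

@[simp]
theorem mapCoeff_apply (f : G →+ H) {n : ℕ} (c : SChain G X n) (σ : C(TopSimplex n, X)) :
    mapCoeff f c σ = f (c σ) := rfl

theorem mapCoeff_precompChain (f : G →+ H) {m k : ℕ} (g : Fin (m + 1) → Fin (k + 1))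
    (c : SChain G X k) : mapCoeff f (precompChain G X g c) = precompChain H X g (mapCoeff f c) :=
  (Finsupp.mapDomain_mapRange _ _ _ (map_zero f) (map_add f)).symm

theorem mapCoeff_boundaryHom (f : G →+ H) {n : ℕ} (c : SChain G X (n + 1)) :
    mapCoeff f (boundaryHom G X n c) = boundaryHom H X n (mapCoeff f c) := by
  simp only [boundaryHom_eq_sum, AddMonoidHom.finsetSum_apply, AddMonoidHom.smul_apply, map_sum,
    map_zsmul, mapCoeff_precompChain]

theorem mapCoeff_chainMapHom (f : G →+ H) (φ : C(X, Y)) {n : ℕ} (c : SChain G X n) :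
    mapCoeff f (chainMapHom φ G n c) = chainMapHom φ H n (mapCoeff f c) :=
  (Finsupp.mapDomain_mapRange _ _ _ (map_zero f) (map_add f)).symm

theorem mapCoeff_injective {f : G →+ H} (hf : Function.Injective f) (n : ℕ) :
    Function.Injective (mapCoeff f (X := X) (n := n)) :=
  Finsupp.mapRange_injective _ (map_zero f) hf

theorem mapCoeff_surjective {f : G →+ H} (hf : Function.Surjective f) (n : ℕ) :
    Function.Surjective (mapCoeff f (X := X) (n := n)) :=
  Finsupp.mapRange_surjective _ (map_zero f) hf

theorem Function.Exact.mapCoeff {f : G →+ H} {g : H →+ K} (hfg : Function.Exact f g) (n : ℕ) :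
    Function.Exact (mapCoeff f (X := X) (n := n)) (mapCoeff g) := by
  intro c
  change _ ↔ c ∈ Set.range (Finsupp.mapRange f (map_zero f))
  simp [Finsupp.range_mapRange, Finsupp.ext_iff, hfg _]

section Relative

variable {U B : Set X} (h : B ⊆ U)

def relBoundaries (G : Type) [AddCommGroup G] (h : B ⊆ U) (k : ℕ) : AddSubgroup (SChain G U k) :=
  (boundaryHom G U k).range ⊔ (chainMapHom (inclCM h) G k).range

def relCycles (G : Type) [AddCommGroup G] (h : B ⊆ U) : (k : ℕ) → AddSubgroup (SChain G U k)
  | 0 => ⊤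
  | k + 1 => (chainMapHom (inclCM h) G k).range.comap (boundaryHom G U k)

theorem zeroRelHomology_iff {k : ℕ} :
    ZeroRelHomology G U B h k ↔ relCycles G h k ≤ relBoundaries G h k := by
  cases k <;>
  simp [ZeroRelHomology, relCycles, relBoundaries, SetLike.le_def, AddSubgroup.mem_sup,
    boundaryHom_apply, chainMapHom_apply, eq_comm]

theorem relBoundaries_le_relCycles (k : ℕ) : relBoundaries G h k ≤ relCycles G h k := by
  cases k with
  | zero => exact le_top
  | succ k =>
    refine sup_le ?_ ?_
    · rintro _ ⟨b, rfl⟩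
      exact ⟨0, by rw [map_zero, boundaryHom_boundaryHom]⟩
    · rintro _ ⟨d, rfl⟩
      exact ⟨boundaryHom G B k d, (boundaryHom_chainMapHom _ d).symm⟩

variable {h}

theorem mapCoeff_mem_relBoundaries (f : G →+ H) {k : ℕ} {c : SChain G U k}
    (hc : c ∈ relBoundaries G h k) : mapCoeff f c ∈ relBoundaries H h k := by
  obtain ⟨_, ⟨b, rfl⟩, _, ⟨d, rfl⟩, rfl⟩ := AddSubgroup.mem_sup.1 hc
  rw [map_add, mapCoeff_boundaryHom, mapCoeff_chainMapHom]
  exact add_mem (AddSubgroup.mem_sup_left ⟨_, rfl⟩) (AddSubgroup.mem_sup_right ⟨_, rfl⟩)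

theorem mapCoeff_mem_relCycles (f : G →+ H) {k : ℕ} {c : SChain G U k}
    (hc : c ∈ relCycles G h k) : mapCoeff f c ∈ relCycles H h k := by
  cases k with
  | zero => trivial
  | succ k =>
    obtain ⟨e, he⟩ := hc
    exact ⟨mapCoeff f e, by rw [← mapCoeff_chainMapHom, he, mapCoeff_boundaryHom]⟩

end Relative

section ShortExact

variable {f : G →+ H} {g : H →+ K}

theorem mem_range_chainMapHom_of_mapCoeff (hf : Function.Injective f)
    (hfg : Function.Exact f g) {φ : C(Y, X)} (hφ : Function.Injective φ) {n : ℕ}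
    {c : SChain G X n} (hc : mapCoeff f c ∈ (chainMapHom φ H n).range) :
    c ∈ (chainMapHom φ G n).range := by
  obtain ⟨e, he⟩ := hc
  have hge : mapCoeff g e = 0 := chainMapHom_injective hφ n (by
    rw [← mapCoeff_chainMapHom, he, (hfg.mapCoeff n).apply_apply_eq_zero, map_zero])
  obtain ⟨w, rfl⟩ := (hfg.mapCoeff n e).1 hge
  exact ⟨w, mapCoeff_injective hf n (by rw [mapCoeff_chainMapHom, he])⟩

variable {U B : Set X} {h : B ⊆ U}

theorem mem_relCycles_of_mapCoeff (hf : Function.Injective f) (hfg : Function.Exact f g)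
    {k : ℕ} {c : SChain G U k} (hc : mapCoeff f c ∈ relCycles H h k) : c ∈ relCycles G h k := by
  cases k with
  | zero => trivial
  | succ k =>
    refine mem_range_chainMapHom_of_mapCoeff hf hfg (Set.inclusion_injective h) ?_
    rw [mapCoeff_boundaryHom]
    exact hc

theorem exists_sub_mapCoeff_mem_relBoundaries (hg : Function.Surjective g)
    (hfg : Function.Exact f g) {k : ℕ} {c : SChain H U k}
    (hc : mapCoeff g c ∈ relBoundaries K h k) : ∃ a, c - mapCoeff f a ∈ relBoundaries H h k := by
  obtain ⟨_, ⟨b, rfl⟩, _, ⟨d, rfl⟩, hbd⟩ := AddSubgroup.mem_sup.1 hc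
  obtain ⟨b, rfl⟩ := mapCoeff_surjective hg _ b
  obtain ⟨d, rfl⟩ := mapCoeff_surjective hg _ d
  have hβ : boundaryHom H U k b + chainMapHom (inclCM h) H k d ∈ relBoundaries H h k :=
    add_mem (AddSubgroup.mem_sup_left ⟨b, rfl⟩) (AddSubgroup.mem_sup_right ⟨d, rfl⟩)
  have hg0 : mapCoeff g (c - (boundaryHom H U k b + chainMapHom (inclCM h) H k d)) = 0 := by
    rw [map_sub, map_add, mapCoeff_boundaryHom, mapCoeff_chainMapHom, hbd, sub_self]
  obtain ⟨a, ha⟩ := (hfg.mapCoeff k _).1 hg0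
  exact ⟨a, by rwa [ha, sub_sub_cancel]⟩

theorem mem_relBoundaries_of_mapCoeff (hf : Function.Injective f) (hg : Function.Surjective g)
    (hfg : Function.Exact f g) {k : ℕ} (hG : relCycles G h k ≤ relBoundaries G h k)
    {c : SChain H U k} (hc : c ∈ relCycles H h k) (hgc : mapCoeff g c ∈ relBoundaries K h k) :
    c ∈ relBoundaries H h k := by
  obtain ⟨a, ha⟩ := exists_sub_mapCoeff_mem_relBoundaries hg hfg hgc
  have hfa : mapCoeff f a ∈ relCycles H h k := by
    simpa using sub_mem hc (relBoundaries_le_relCycles h k ha)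
  have hfa' := mapCoeff_mem_relBoundaries f (hG (mem_relCycles_of_mapCoeff hf hfg hfa))
  simpa using add_mem ha hfa'

theorem ZeroRelHomology.of_exact (hf : Function.Injective f) (hg : Function.Surjective g)
    (hfg : Function.Exact f g) {k : ℕ} (hH : ZeroRelHomology H U B h k)
    (hK : ZeroRelHomology K U B h (k + 1)) : ZeroRelHomology G U B h k := by
  rw [zeroRelHomology_iff] at hH hK ⊢
  intro c hc
  obtain ⟨_, ⟨c', rfl⟩, _, ⟨d, rfl⟩, hcd⟩ :=
    AddSubgroup.mem_sup.1 (hH (mapCoeff_mem_relCycles f hc))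
  have hgc' : mapCoeff g c' ∈ relCycles K h (k + 1) := by
    refine ⟨-mapCoeff g d, ?_⟩
    rw [map_neg, ← mapCoeff_chainMapHom, ← mapCoeff_boundaryHom, eq_sub_of_add_eq hcd, map_sub,
      (hfg.mapCoeff k).apply_apply_eq_zero, zero_sub]
  obtain ⟨a, ha⟩ := exists_sub_mapCoeff_mem_relBoundaries hg hfg (hK hgc')
  obtain ⟨e, he⟩ := relBoundaries_le_relCycles h (k + 1) ha
  obtain ⟨w, hw⟩ : c - boundaryHom G U k a ∈ (chainMapHom (inclCM h) G k).range := by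
    refine mem_range_chainMapHom_of_mapCoeff hf hfg (Set.inclusion_injective h)
      ⟨e + d, ?_⟩
    rw [map_add, he, map_sub, map_sub, mapCoeff_boundaryHom, ← hcd]
    abel
  rw [eq_sub_iff_add_eq'] at hw
  rw [← hw]
  exact add_mem (AddSubgroup.mem_sup_left ⟨a, rfl⟩) (AddSubgroup.mem_sup_right ⟨w, rfl⟩)

end ShortExact

theorem pTorsion_finsupp_eq_top {α M : Type} [AddCommGroup M] {p : ℕ} (hM : pTorsion p M = ⊤) :
    pTorsion p (α →₀ M) = ⊤ := by
  refine (AddSubgroup.eq_top_iff' _).2 fun c => ?_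
  induction c using Finsupp.induction with
  | zero => exact zero_mem _
  | single_add a x c _ _ ih =>
    obtain ⟨k, hk⟩ := (AddSubgroup.eq_top_iff' _).1 hM x
    exact add_mem ⟨k, by rw [Finsupp.smul_single, hk, Finsupp.single_zero]⟩ ih

theorem ZeroRelHomology.of_pTorsion_eq_top {p : ℕ} {f : G →+ H} (hf : Function.Injective f)
    (hp : Function.Surjective (DistribSMul.toAddMonoidHom H p))
    (hfp : Function.Exact f (DistribSMul.toAddMonoidHom H p)) (hH : pTorsion p H = ⊤)
    {U B : Set X} {h : B ⊆ U} {k : ℕ} (hG : ZeroRelHomology G U B h k) :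
    ZeroRelHomology H U B h k := by
  rw [zeroRelHomology_iff] at hG ⊢
  have hmap (c : SChain H U k) : mapCoeff (DistribSMul.toAddMonoidHom H p) c = p • c := by
    ext; simp
  have key (m : ℕ) (c : SChain H U k) (hc : c ∈ relCycles H h k) (hm : (p ^ m : ℕ) • c = 0) :
      c ∈ relBoundaries H h k := by
    induction m generalizing c with
    | zero =>
      rw [pow_zero, one_smul] at hm
      exact hm ▸ zero_mem _
    | succ m ih =>
      refine mem_relBoundaries_of_mapCoeff hf hp hfp hG hc ?_
      rw [hmap]
      exact ih _ (AddSubgroup.nsmul_mem _ hc p) (by rwa [smul_smul, ← pow_succ])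
  intro c hc
  obtain ⟨m, hm⟩ := (AddSubgroup.eq_top_iff' _).1 (pTorsion_finsupp_eq_top hH) c
  exact key m c hc hm

namespace PruferGroup

variable {p : ℕ}

theorem mk_eq_zero_iff {r : ℚ} :
    (r : ℚ ⧸ AddSubgroup.zmultiples (1 : ℚ)) = 0 ↔ ∃ m : ℤ, (m : ℚ) = r := by
  simp [QuotientAddGroup.eq_zero_iff, AddSubgroup.mem_zmultiples_iff]

theorem nsmul_mk (n : ℕ) (r : ℚ) :
    n • (r : ℚ ⧸ AddSubgroup.zmultiples (1 : ℚ)) = ((n * r : ℚ) : ℚ ⧸ _) := by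
  rw [← QuotientAddGroup.mk_nsmul, nsmul_eq_mul]

theorem pTorsion_eq_top : pTorsion p (PruferGroup p) = ⊤ :=
  (AddSubgroup.eq_top_iff' _).2 fun x => x.2.imp fun _ hk => Subtype.ext hk

theorem nsmul_surjective (hp : p ≠ 0) :
    Function.Surjective (DistribSMul.toAddMonoidHom (PruferGroup p) p) := by
  rintro ⟨x, k, hk⟩
  obtain ⟨r, rfl⟩ := QuotientAddGroup.mk_surjective x
  have hp' : (p : ℚ) ≠ 0 := Nat.cast_ne_zero.2 hp
  refine ⟨⟨QuotientAddGroup.mk (r / p), k + 1, ?_⟩, Subtype.ext ?_⟩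
  · rwa [nsmul_mk, pow_succ, Nat.cast_mul, mul_assoc, mul_div_cancel₀ _ hp', ← nsmul_mk]
  · change p • (QuotientAddGroup.mk (r / p) : ℚ ⧸ AddSubgroup.zmultiples (1 : ℚ)) = _
    rw [nsmul_mk, mul_div_cancel₀ _ hp']

def invP (hp : p ≠ 0) : PruferGroup p :=
  ⟨(((p : ℚ)⁻¹ : ℚ) : ℚ ⧸ _), 1, by
    rw [nsmul_mk, pow_one, mul_inv_cancel₀ (Nat.cast_ne_zero.2 hp)]
    exact mk_eq_zero_iff.2 ⟨1, Int.cast_one⟩⟩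

theorem zsmul_invP_val (hp : p ≠ 0) (m : ℤ) :
    (m • invP hp).1 = ((m / p : ℚ) : ℚ ⧸ AddSubgroup.zmultiples (1 : ℚ)) := by
  rw [AddSubgroup.coe_zsmul, invP, ← QuotientAddGroup.mk_zsmul, zsmul_eq_mul, div_eq_mul_inv]

def ofZMod (hp : p ≠ 0) : ZMod p →+ PruferGroup p :=
  ZMod.lift p ⟨zmultiplesHom _ (invP hp), Subtype.ext (by
    rw [zmultiplesHom_apply, zsmul_invP_val, Int.cast_natCast, div_self (Nat.cast_ne_zero.2 hp)]
    exact mk_eq_zero_iff.2 ⟨1, Int.cast_one⟩)⟩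

theorem ofZMod_intCast (hp : p ≠ 0) (m : ℤ) : ofZMod hp m = m • invP hp :=
  ZMod.lift_coe _ _ _

theorem ofZMod_injective (hp : p ≠ 0) : Function.Injective (ofZMod hp) := by
  refine (ZMod.lift_injective p).2 fun m hm => ?_
  obtain ⟨l, hl⟩ := mk_eq_zero_iff.1 ((zsmul_invP_val hp m).symm.trans (congrArg Subtype.val hm))
  rw [eq_div_iff (Nat.cast_ne_zero.2 hp)] at hl
  exact (ZMod.intCast_zmod_eq_zero_iff_dvd m p).2
    ⟨l, by exact_mod_cast hl.symm.trans (mul_comm _ _)⟩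

theorem exact_ofZMod_nsmul (hp : p ≠ 0) :
    Function.Exact (ofZMod hp) (DistribSMul.toAddMonoidHom (PruferGroup p) p) := by
  intro x
  constructor
  · intro hpx
    obtain ⟨x, hx⟩ := x
    obtain ⟨r, rfl⟩ := QuotientAddGroup.mk_surjective x
    obtain ⟨m, hm⟩ := mk_eq_zero_iff.1 ((nsmul_mk p r).symm.trans (congrArg Subtype.val hpx))
    refine ⟨m, Subtype.ext ?_⟩
    rw [ofZMod_intCast, zsmul_invP_val, hm, mul_div_cancel_left₀ _ (Nat.cast_ne_zero.2 hp)]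
  · rintro ⟨a, rfl⟩
    rw [DistribSMul.toAddMonoidHom_apply, ← map_nsmul, nsmul_eq_mul, ZMod.natCast_self, zero_mul,
      map_zero]

end PruferGroup

/-- If `A` is a `ℤ/p`-homological `Z_n`-set in `X`, then it is a Prüfer-`p`-group-homological
`Z_n`-set; conversely, if `A` is a Prüfer-`p`-group-homological `Z_{n+1}`-set, then it is a
`ℤ/p`-homological `Z_n`-set. -/
theorem homologicalZSet_zmod_prufer {p : ℕ} (hp : p.Prime) {X : Type} [TopologicalSpace X]
    (A : Set X) (n : ℕ) :
    (IsGHomologicalZSet (ZMod p) A n → IsGHomologicalZSet (PruferGroup p) A n) ∧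
    (IsGHomologicalZSet (PruferGroup p) A (n + 1) → IsGHomologicalZSet (ZMod p) A n) := by
  have hinj := PruferGroup.ofZMod_injective hp.ne_zero
  have hsurj := PruferGroup.nsmul_surjective hp.ne_zero
  have hexact := PruferGroup.exact_ofZMod_nsmul hp.ne_zero
  refine ⟨fun ⟨hA, hZ⟩ => ⟨hA, fun U hU k hk => ?_⟩, fun ⟨hA, hZ⟩ => ⟨hA, fun U hU k hk => ?_⟩⟩
  · exact (hZ U hU k hk).of_pTorsion_eq_top hinj hsurj hexact PruferGroup.pTorsion_eq_top
  · exact (hZ U hU k (by omega)).of_exact hinj hsurj hexact (hZ U hU (k + 1) (by omega))
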